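/- arXiv:2512.03930 — 6 statements merged into one kernel-verified Lean document; each statement's English description precedes it below -/
import Mathlib

section
/- Let G be a normal-form game and let G', G'' be two reductions of G with strategy-profile sets S' and S'' such that the player-by-player union satisfies (S'_1 ∪ S''_1) × ... × (S'_n ∪ S''_n) = S. Then any strategy profile that is a Nash equilibrium of both G' and G'' is a Nash equilibrium of G. (The Nash equilibrium correspondence satisfies Merging Consistency.) -/
universe u v

variable {ι : Type u} {σ : ι → Type v}

/-- A normal-form game: nonempty strategy sets and complete, transitive
preferences over strategy profiles. -/
structure Game (ι : Type u) (σ : ι → Type v) where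
  S : ∀ i, Set (σ i)
  nonempty : ∀ i, (S i).Nonempty
  pref : ι → (∀ i, σ i) → (∀ i, σ i) → Prop
  complete : ∀ i s t, (∀ j, s j ∈ S j) → (∀ j, t j ∈ S j) → pref i s t ∨ pref i t s
  trans : ∀ i s t u, (∀ j, s j ∈ S j) → (∀ j, t j ∈ S j) → (∀ j, u j ∈ S j) →
    pref i s t → pref i t u → pref i s u

/-- The set of feasible strategy profiles of a game. -/
def Game.profiles (G : Game ι σ) : Set (∀ i, σ i) := {s | ∀ i, s i ∈ G.S i}

/-- The strict part of player `i`'s preference. -/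
def Game.StrictPref (G : Game ι σ) (i : ι) (s t : ∀ j, σ j) : Prop :=
  G.pref i s t ∧ ¬ G.pref i t s

/-- Nash equilibrium: a feasible profile from which no player can unilaterally
deviate to a strictly preferred profile. -/
def Game.IsNash [DecidableEq ι] (G : Game ι σ) (s : ∀ i, σ i) : Prop :=
  s ∈ G.profiles ∧ ∀ i, ∀ t ∈ G.S i, G.pref i s (Function.update s i t)

/-- `G'` is a reduction of `G`: same players, nonempty subsets of strategy
sets, preferences restricted to the smaller profile set. -/
def IsReduction (G' G : Game ι σ) : Prop :=
  (∀ i, G'.S i ⊆ G.S i) ∧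
  ∀ i s t, G'.pref i s t ↔ (G.pref i s t ∧ s ∈ G'.profiles ∧ t ∈ G'.profiles)

/-- `G'` is a strict reduction of `G`: a reduction obtained by removing at
least one strategy, every removed strategy being strictly dominated by some
remaining strategy of the same player. -/
def IsStrictReduction [DecidableEq ι] (G' G : Game ι σ) : Prop :=
  IsReduction G' G ∧ (∃ j, (G.S j \ G'.S j).Nonempty) ∧
  ∀ i, ∀ si ∈ G.S i \ G'.S i, ∃ si' ∈ G'.S i,
    ∀ s ∈ G.profiles, G.StrictPref i (Function.update s i si') (Function.update s i si)

/-- `s` is a profile of strategies each of which maximizes its player's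
preference uniformly over all opponents' profiles (weak dominance). -/
def JointlyOptimal [DecidableEq ι] (G : Game ι σ) (s : ∀ i, σ i) : Prop :=
  s ∈ G.profiles ∧ ∀ i, ∀ t ∈ G.profiles, ∀ u ∈ G.S i,
    G.pref i (Function.update t i (s i)) (Function.update t i u)

/-- The reduction `G'` of `G` has a dummy player. -/
def HasDummy (G' G : Game ι σ) : Prop :=
  ∃ j, (∃ x, G'.S j = {x}) ∧ ∀ i, i ≠ j → G'.S i = G.S i ∨ ∃ x, G'.S i = {x}

/-- The reduction `G'` of `G` has a quasi-dummy player. -/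
def HasQuasiDummy (G' G : Game ι σ) : Prop :=
  ∃ j, (∃ x y : σ j, x ≠ y ∧ G'.S j = {x, y}) ∧
    ∀ i, i ≠ j → G'.S i = G.S i ∨ ∃ x y : σ i, G'.S i ⊆ {x, y}

/-- A class of games is d-closed if it contains every reduction with a dummy
or quasi-dummy player of each of its games. -/
def DClosed (Γ : Set (Game ι σ)) : Prop :=
  ∀ G ∈ Γ, ∀ G', IsReduction G' G → (HasDummy G' G ∨ HasQuasiDummy G' G) → G' ∈ Γ

/-- Independence of irrelevant strategies. -/
def SatIIS (Γ : Set (Game ι σ)) (φ : Game ι σ → Set (∀ i, σ i)) : Prop :=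
  ∀ G ∈ Γ, ∀ G' ∈ Γ, IsReduction G' G → G'.profiles ∩ φ G ⊆ φ G'

/-- Merging consistency. -/
def SatMC (Γ : Set (Game ι σ)) (φ : Game ι σ → Set (∀ i, σ i)) : Prop :=
  ∀ G ∈ Γ, ∀ G' ∈ Γ, ∀ G'' ∈ Γ, IsReduction G' G → IsReduction G'' G →
    (∀ i, G'.S i ∪ G''.S i = G.S i) → φ G' ∩ φ G'' ⊆ φ G

/-- Invariance to strictly dominated strategies. -/
def SatISDS [DecidableEq ι] (Γ : Set (Game ι σ)) (φ : Game ι σ → Set (∀ i, σ i)) : Prop :=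
  ∀ G ∈ Γ, ∀ G' ∈ Γ, IsStrictReduction G' G → φ G = φ G'

/-- Joint optimality. -/
def SatJO [DecidableEq ι] (Γ : Set (Game ι σ)) (φ : Game ι σ → Set (∀ i, σ i)) : Prop :=
  ∀ G ∈ Γ, ∀ s, JointlyOptimal G s → s ∈ φ G

theorem IsReduction.mem_profiles {G' G : Game ι σ} (h : IsReduction G' G) {s : ∀ i, σ i}
    (hs : s ∈ G'.profiles) : s ∈ G.profiles :=
  fun i => h.1 i (hs i)

theorem IsReduction.pref {G' G : Game ι σ} (h : IsReduction G' G) {i : ι} {s t : ∀ i, σ i}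
    (hst : G'.pref i s t) : G.pref i s t :=
  ((h.2 i s t).mp hst).1

theorem Game.IsNash.pref_update_of_isReduction [DecidableEq ι] {G' G : Game ι σ}
    (h : IsReduction G' G) {s : ∀ i, σ i} (hs : G'.IsNash s) {i : ι} {t : σ i}
    (ht : t ∈ G'.S i) : G.pref i s (Function.update s i t) :=
  h.pref (hs.2 i t ht)

theorem nash_MC_general [DecidableEq ι] (G G' G'' : Game ι σ)
    (hred' : IsReduction G' G) (hred'' : IsReduction G'' G)
    (hmerge : ∀ i, G'.S i ∪ G''.S i = G.S i) (s : ∀ i, σ i)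
    (h' : G'.IsNash s) (h'' : G''.IsNash s) :
    G.IsNash s := by
  refine ⟨hred'.mem_profiles h'.1, fun i t ht => ?_⟩
  rcases (hmerge i).symm ▸ ht with ht' | ht''
  · exact h'.pref_update_of_isReduction hred' ht'
  · exact h''.pref_update_of_isReduction hred'' ht''

/-- The Nash equilibrium correspondence satisfies Merging Consistency. -/
theorem nash_MC [DecidableEq ι] [Fintype ι] (G G' G'' : Game ι σ)
    (hred' : IsReduction G' G) (hred'' : IsReduction G'' G)
    (hmerge : ∀ i, G'.S i ∪ G''.S i = G.S i) (s : ∀ i, σ i)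
    (h' : G'.IsNash s) (h'' : G''.IsNash s) :
    G.IsNash s :=
  nash_MC_general G G' G'' hred' hred'' hmerge s h' h''
end

section
/- Let Γ be a d-closed class of normal-form games and φ a solution concept on Γ satisfying Independence of Irrelevant Strategies, Invariance to Strictly Dominated Strategies, and Joint Optimality. Then for every game G in Γ, every strategy profile in φ(G) is a Nash equilibrium of G. -/
/-!
Suppose `s ∈ φ G` but player `i` strictly prefers deviating to `t`, giving `u = update s i t`.
Restrict `G` to the strategies `{s j, u j}`: only player `i` keeps two strategies, so this is a
quasi-dummy reduction of `G`, and IIS keeps `s` in its solution. In the restricted game `t`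
strictly dominates `s i`, so discarding `s i` is a strict reduction to the one-profile (dummy)
game `{u}`. ISDS then puts `s` into the solution of a game whose only profile is `u ≠ s`.
-/

universe u v

variable {ι : Type u} {σ : ι → Type v}

open Function

namespace Game

lemma pref_refl (G : Game ι σ) {s : ∀ i, σ i} (hs : s ∈ G.profiles) (i : ι) : G.pref i s s :=
  (G.complete i s s hs hs).elim id id

lemma update_mem_profiles [DecidableEq ι] (G : Game ι σ) {s : ∀ i, σ i} (hs : s ∈ G.profiles)
    {i : ι} {t : σ i} (ht : t ∈ G.S i) : update s i t ∈ G.profiles :=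
  (forall_update_iff s fun j x => x ∈ G.S j).2 ⟨ht, fun j _ => hs j⟩

def restrict (G : Game ι σ) (T : ∀ i, Set (σ i)) (hT : ∀ i, T i ⊆ G.S i)
    (hne : ∀ i, (T i).Nonempty) : Game ι σ where
  S := T
  nonempty := hne
  pref i s t := G.pref i s t ∧ (∀ j, s j ∈ T j) ∧ (∀ j, t j ∈ T j)
  complete i s t hs ht :=
    (G.complete i s t (fun j => hT j (hs j)) (fun j => hT j (ht j))).imp
      (fun h => ⟨h, hs, ht⟩) (fun h => ⟨h, ht, hs⟩)
  trans i s t u hs ht hu hst htu :=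
    ⟨G.trans i s t u (fun j => hT j (hs j)) (fun j => hT j (ht j)) (fun j => hT j (hu j))
      hst.1 htu.1, hs, hu⟩

lemma isReduction_restrict (G : Game ι σ) (T : ∀ i, Set (σ i)) (hT : ∀ i, T i ⊆ G.S i)
    (hne : ∀ i, (T i).Nonempty) : IsReduction (G.restrict T hT hne) G :=
  ⟨hT, fun _ _ _ => Iff.rfl⟩

def restrictPoint (G : Game ι σ) (u : ∀ i, σ i) (hu : u ∈ G.profiles) : Game ι σ :=
  G.restrict (fun j => {u j}) (fun j => Set.singleton_subset_iff.2 (hu j))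
    (fun _ => Set.singleton_nonempty _)

def restrictPair (G : Game ι σ) (s u : ∀ i, σ i) (hs : s ∈ G.profiles) (hu : u ∈ G.profiles) :
    Game ι σ :=
  G.restrict (fun j => {s j, u j})
    (fun j => Set.insert_subset (hs j) (Set.singleton_subset_iff.2 (hu j)))
    (fun _ => Set.insert_nonempty _ _)

section restrict

variable (G : Game ι σ) {s u : ∀ i, σ i} (hs : s ∈ G.profiles) (hu : u ∈ G.profiles)

@[simp]
lemma restrictPair_S (j : ι) : (G.restrictPair s u hs hu).S j = {s j, u j} := rfl

lemma isReduction_restrictPoint : IsReduction (G.restrictPoint u hu) G :=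
  G.isReduction_restrict _ _ _

lemma isReduction_restrictPair : IsReduction (G.restrictPair s u hs hu) G :=
  G.isReduction_restrict _ _ _

lemma eq_of_mem_profiles_restrictPoint {p : ∀ i, σ i} (hp : p ∈ (G.restrictPoint u hu).profiles) :
    p = u :=
  funext hp

lemma left_mem_profiles_restrictPair : s ∈ (G.restrictPair s u hs hu).profiles :=
  fun _ => Set.mem_insert _ _

lemma right_mem_profiles_restrictPair : u ∈ (G.restrictPair s u hs hu).profiles :=
  fun _ => Set.mem_insert_of_mem _ rfl

lemma hasDummy_restrictPoint (j : ι) : HasDummy (G.restrictPoint u hu) G :=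
  ⟨j, ⟨u j, rfl⟩, fun i _ => Or.inr ⟨u i, rfl⟩⟩

lemma hasQuasiDummy_restrictPair {j : ι} (hj : s j ≠ u j) :
    HasQuasiDummy (G.restrictPair s u hs hu) G :=
  ⟨j, ⟨s j, u j, hj, rfl⟩, fun i _ => Or.inr ⟨s i, u i, subset_rfl⟩⟩

end restrict

variable [DecidableEq ι]

def IsStrictlyDominant (G : Game ι σ) (u : ∀ i, σ i) : Prop :=
  ∀ j, ∀ x ∈ G.S j, x ≠ u j → ∀ p ∈ G.profiles,
    G.StrictPref j (update p j (u j)) (update p j x)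

lemma IsStrictlyDominant.isStrictReduction_restrictPoint {G : Game ι σ} {u : ∀ i, σ i}
    (hdom : G.IsStrictlyDominant u) (hu : u ∈ G.profiles) {j : ι} {x : σ j} (hx : x ∈ G.S j)
    (hxu : x ≠ u j) : IsStrictReduction (G.restrictPoint u hu) G :=
  ⟨G.isReduction_restrictPoint hu, ⟨j, x, hx, hxu⟩,
    fun i y hy => ⟨u i, rfl, hdom i y hy.1 hy.2⟩⟩

section deviation

variable {G : Game ι σ} {s : ∀ i, σ i} {i : ι} {t : σ i} (hs : s ∈ G.profiles) (ht : t ∈ G.S i)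

include hs in
lemma ne_of_not_pref_update (hdev : ¬ G.pref i s (update s i t)) : s i ≠ t := by
  rintro rfl
  rw [update_eq_self] at hdev
  exact hdev (G.pref_refl hs i)

lemma update_eq_of_mem_profiles_restrictPair {p : ∀ i, σ i}
    (hp : p ∈ (G.restrictPair s (update s i t) hs (G.update_mem_profiles hs ht)).profiles)
    (x : σ i) : update p i x = update s i x := by
  funext k
  rcases eq_or_ne k i with rfl | hk
  · simp
  · simpa [hk] using hp k

lemma isStrictlyDominant_restrictPair (hdev : ¬ G.pref i s (update s i t)) :
    (G.restrictPair s (update s i t) hs (G.update_mem_profiles hs ht)).IsStrictlyDominant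
      (update s i t) := by
  intro j x hx hxu p hp
  obtain rfl : x = s j := by simpa [hxu] using hx
  obtain rfl : j = i := by
    by_contra hji
    exact hxu (update_of_ne hji t s).symm
  rw [update_eq_of_mem_profiles_restrictPair hs ht hp,
    update_eq_of_mem_profiles_restrictPair hs ht hp, update_self, update_eq_self]
  have hu := G.update_mem_profiles hs ht
  exact ⟨⟨(G.complete j s _ hs hu).resolve_left hdev, G.right_mem_profiles_restrictPair hs hu,
    G.left_mem_profiles_restrictPair hs hu⟩, fun h => hdev h.1⟩

end deviation

end Game

theorem sol_subset_nash_general [DecidableEq ι]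
    (Γ : Set (Game ι σ)) (φ : Game ι σ → Set (∀ i, σ i))
    (hsol : ∀ G ∈ Γ, φ G ⊆ G.profiles) (hd : DClosed Γ)
    (hIIS : SatIIS Γ φ) (hISDS : SatISDS Γ φ) :
    ∀ G ∈ Γ, ∀ s ∈ φ G, G.IsNash s := by
  intro G hG s hs
  have hsG : s ∈ G.profiles := hsol G hG hs
  refine ⟨hsG, fun i t ht => ?_⟩
  by_contra hdev
  have hne : s i ≠ update s i t i := by simpa using Game.ne_of_not_pref_update hsG hdev
  have hu := G.update_mem_profiles hsG ht
  set G' := G.restrictPair s (update s i t) hsG hu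
  have hu' := G.right_mem_profiles_restrictPair hsG hu
  set G'' := G'.restrictPoint (update s i t) hu'
  have hG' : G' ∈ Γ :=
    hd G hG G' (G.isReduction_restrictPair hsG hu)
      (Or.inr (G.hasQuasiDummy_restrictPair hsG hu hne))
  have hG'' : G'' ∈ Γ :=
    hd G' hG' G'' (G'.isReduction_restrictPoint hu') (Or.inl (G'.hasDummy_restrictPoint hu' i))
  have hsG' : s ∈ φ G' :=
    hIIS G hG G' hG' (G.isReduction_restrictPair hsG hu)
      ⟨G.left_mem_profiles_restrictPair hsG hu, hs⟩
  have hstrict : IsStrictReduction G'' G' :=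
    (Game.isStrictlyDominant_restrictPair hsG ht hdev).isStrictReduction_restrictPoint hu'
      (G.left_mem_profiles_restrictPair hsG hu i) hne
  have hsG'' : s ∈ φ G'' := hISDS G' hG' G'' hG'' hstrict ▸ hsG'
  have hsu : s = update s i t := G'.eq_of_mem_profiles_restrictPoint hu' (hsol G'' hG'' hsG'')
  exact hne (congrFun hsu i)

/-- Lemma 1(a): on a d-closed class, any solution concept
satisfying IIS, ISDS and JO selects only Nash equilibria. -/
theorem sol_subset_nash [DecidableEq ι] [Fintype ι] [Nonempty ι]
    (Γ : Set (Game ι σ)) (φ : Game ι σ → Set (∀ i, σ i))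
    (hsol : ∀ G ∈ Γ, φ G ⊆ G.profiles) (hd : DClosed Γ)
    (hIIS : SatIIS Γ φ) (hISDS : SatISDS Γ φ) (hJO : SatJO Γ φ) :
    ∀ G ∈ Γ, ∀ s ∈ φ G, G.IsNash s :=
  sol_subset_nash_general Γ φ hsol hd hIIS hISDS
end

section
/- Let Γ be a strictly closed class of one-player games and φ a solution concept on Γ satisfying ISDS. Then for every G in Γ, every element of φ(G) is a preference-maximal strategy (i.e., a Nash equilibrium) of G. -/
universe u v

variable {ι : Type u} {σ : ι → Type v}

variable {α : Type u}

/-- A one-player game: a nonempty strategy set with a complete and transitive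
preference relation on it. -/
structure OneGame (α : Type u) where
  S : Set α
  nonempty : S.Nonempty
  pref : α → α → Prop
  complete : ∀ s ∈ S, ∀ t ∈ S, pref s t ∨ pref t s
  trans : ∀ s ∈ S, ∀ t ∈ S, ∀ u ∈ S, pref s t → pref t u → pref s u

/-- `G'` is a strict reduction of the one-player game `G`: at least one
strategy is removed, each removed strategy being strictly dominated by some
remaining one; preferences are restricted. -/
def OneGame.IsStrictReduction (G' G : OneGame α) : Prop :=
  G'.S ⊆ G.S ∧ (G.S \ G'.S).Nonempty ∧
  (∀ s t, G'.pref s t ↔ (G.pref s t ∧ s ∈ G'.S ∧ t ∈ G'.S)) ∧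
  ∀ s ∈ G.S \ G'.S, ∃ s' ∈ G'.S, G.pref s' s ∧ ¬ G.pref s s'

/-- The preference-maximal strategies (Nash equilibria) of a one-player game. -/
def OneGame.maxSet (G : OneGame α) : Set α := {s ∈ G.S | ∀ t ∈ G.S, G.pref s t}

/-- A strictly closed class of one-player games. -/
def StrictlyClosed1 (Γ : Set (OneGame α)) : Prop :=
  ∀ G ∈ Γ, ∀ G', G'.IsStrictReduction G → G' ∈ Γ

/-- ISDS for one-player games. -/
def SatISDS1 (Γ : Set (OneGame α)) (φ : OneGame α → Set α) : Prop :=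
  ∀ G ∈ Γ, ∀ G' ∈ Γ, G'.IsStrictReduction G → φ G = φ G'

/-- JO for one-player games. -/
def SatJO1 (Γ : Set (OneGame α)) (φ : OneGame α → Set α) : Prop :=
  ∀ G ∈ Γ, ∀ s ∈ G.maxSet, s ∈ φ G

/-! A strategy that is not preference-maximal is strictly dominated by some other strategy, so
deleting it alone is a strict reduction. ISDS leaves the solution unchanged under that deletion,
yet the solution of the reduced game cannot contain the deleted strategy. -/

namespace OneGame

def restrict (G : OneGame α) (T : Set α) (hT : T ⊆ G.S) (hne : T.Nonempty) : OneGame α where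
  S := T
  nonempty := hne
  pref a b := G.pref a b ∧ a ∈ T ∧ b ∈ T
  complete a ha b hb := (G.complete a (hT ha) b (hT hb)).imp (⟨·, ha, hb⟩) (⟨·, hb, ha⟩)
  trans a ha b hb c hc hab hbc := ⟨G.trans a (hT ha) b (hT hb) c (hT hc) hab.1 hbc.1, ha, hc⟩

theorem restrict_isStrictReduction (G : OneGame α) {T : Set α} (hT : T ⊆ G.S)
    (hne : T.Nonempty) (hremoved : (G.S \ T).Nonempty)
    (hdom : ∀ s ∈ G.S \ T, ∃ s' ∈ T, G.pref s' s ∧ ¬ G.pref s s') :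
    (G.restrict T hT hne).IsStrictReduction G :=
  ⟨hT, hremoved, fun _ _ => Iff.rfl, hdom⟩

theorem exists_strictPref_of_notMem_maxSet {G : OneGame α} {s : α} (hs : s ∈ G.S)
    (hmax : s ∉ G.maxSet) : ∃ t ∈ G.S, G.pref t s ∧ ¬ G.pref s t := by
  obtain ⟨t, ht, hst⟩ : ∃ t ∈ G.S, ¬ G.pref s t := by
    simpa [maxSet, hs] using hmax
  exact ⟨t, ht, (G.complete s hs t ht).resolve_left hst, hst⟩

theorem exists_isStrictReduction_notMem {G : OneGame α} {s t : α} (hs : s ∈ G.S)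
    (ht : t ∈ G.S) (hts : G.pref t s) (hst : ¬ G.pref s t) :
    ∃ G' : OneGame α, G'.IsStrictReduction G ∧ s ∉ G'.S := by
  have hts_ne : t ≠ s := by
    rintro rfl
    exact hst hts
  have hdom : ∀ r ∈ G.S \ (G.S \ {s}), ∃ r' ∈ G.S \ {s}, G.pref r' r ∧ ¬ G.pref r r' := by
    rintro r ⟨hr, hr'⟩
    obtain rfl : r = s := by simpa [hr] using hr'
    exact ⟨t, ⟨ht, hts_ne⟩, hts, hst⟩
  exact ⟨G.restrict (G.S \ {s}) Set.sdiff_subset ⟨t, ht, hts_ne⟩,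
    G.restrict_isStrictReduction _ _ ⟨s, hs, fun h => h.2 rfl⟩ hdom, fun h => h.2 rfl⟩

end OneGame

/-- on a strictly closed class of one-player games, ISDS forces a
solution concept to select only preference-maximal strategies. -/
theorem oneplayer_ISDS_subset_max (Γ : Set (OneGame α)) (φ : OneGame α → Set α)
    (hsol : ∀ G ∈ Γ, φ G ⊆ G.S) (hclosed : StrictlyClosed1 Γ)
    (hISDS : SatISDS1 Γ φ) :
    ∀ G ∈ Γ, φ G ⊆ G.maxSet := by
  intro G hG s hs
  have hsS : s ∈ G.S := hsol G hG hs
  by_contra hmax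
  obtain ⟨t, ht, hts, hst⟩ := OneGame.exists_strictPref_of_notMem_maxSet hsS hmax
  obtain ⟨G', hred, hsG'⟩ := OneGame.exists_isStrictReduction_notMem hsS ht hts hst
  have hG' : G' ∈ Γ := hclosed G hG G' hred
  have hs' : s ∈ φ G' := hISDS G hG G' hG' hred ▸ hs
  exact hsG' (hsol G' hG' hs')
end

section
/- In a two-player game G with strategy sets {U, D} × {L, R} and payoffs u(U,L) = (2,2), u(U,R) = (0,0), u(D,L) = (1,1), u(D,R) = (1,1), the strong Nash equilibrium correspondence violates Merging Consistency: the profile (D,R) is a strong Nash equilibrium of both the reduction with profiles {U,D} × {R} and the reduction with profiles {D} × {L,R}, the player-by-player union of whose strategy sets equals that of G, yet (D,R) is not a strong Nash equilibrium of G. -/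
universe u v

variable {ι : Type u} {σ : ι → Type v}

/-- Strong Nash equilibrium: no nonempty coalition has a feasible joint
deviation making each of its members strictly better off. -/
def Game.IsStrongNash (G : Game ι σ) (s : ∀ i, σ i) : Prop :=
  s ∈ G.profiles ∧ ¬ ∃ (C : Set ι) (t : ∀ i, σ i), C.Nonempty ∧ t ∈ G.profiles ∧
    (∀ i ∉ C, t i = s i) ∧ ∀ i ∈ C, G.StrictPref i t s

/-- Common payoff function of the game: player 1 strategies U = `true`,
D = `false`; player 2 strategies L = `true`, R = `false`.
u(U,L) = 2, u(U,R) = 0, u(D,L) = u(D,R) = 1, identical for both players. -/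
noncomputable def exPay : Fin 2 → (Fin 2 → Bool) → ℝ := fun _ s =>
  if s 0 = true then (if s 1 = true then 2 else 0) else 1

/-- The full 2×2 game `G` of Example 2. -/
noncomputable def exG : Game (Fin 2) (fun _ => Bool) where
  S := fun _ => Set.univ
  nonempty := fun _ => ⟨true, trivial⟩
  pref := fun i s t => exPay i t ≤ exPay i s
  complete := fun i s t _ _ => le_total _ _
  trans := fun i s t u _ _ _ h1 h2 => le_trans h2 h1

/-- Strategy sets of a reduction of `exG`. -/
def exSub (T₁ T₂ : Set Bool) : ∀ _ : Fin 2, Set Bool := fun i =>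
  if i = 0 then T₁ else T₂

/-- The reduction of `exG` with strategy sets `T₁ × T₂` and restricted
preferences. -/
noncomputable def exRed (T₁ T₂ : Set Bool) (h₁ : T₁.Nonempty) (h₂ : T₂.Nonempty) :
    Game (Fin 2) (fun _ => Bool) where
  S := exSub T₁ T₂
  nonempty := by
    intro i
    by_cases h : i = 0 <;> simp [exSub, h, h₁, h₂]
  pref := fun i s t => (exPay i t ≤ exPay i s) ∧
    (∀ j, s j ∈ exSub T₁ T₂ j) ∧ (∀ j, t j ∈ exSub T₁ T₂ j)
  complete := by
    intro i s t hs ht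
    rcases le_total (exPay i t) (exPay i s) with h | h
    · exact Or.inl ⟨h, hs, ht⟩
    · exact Or.inr ⟨h, ht, hs⟩
  trans := by
    intro i s t u hs ht hu h1 h2
    exact ⟨le_trans h2.1 h1.1, hs, hu⟩

/-! The profile (D,R) gives both players payoff 1. In each of the two reductions no feasible
profile pays more than 1, so (D,R) maximises the common payoff there and no coalition can
gain by deviating. In the full game, however, the grand coalition moves jointly to (U,L),
where both players get 2: that deviation needs both of U and L, and neither reduction
contains both. -/

namespace Game

theorem isStrongNash_of_forall_pref (G : Game ι σ) {s : ∀ i, σ i} (hs : s ∈ G.profiles)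
    (hmax : ∀ i, ∀ t ∈ G.profiles, G.pref i s t) : G.IsStrongNash s := by
  refine ⟨hs, ?_⟩
  rintro ⟨C, t, ⟨i, hi⟩, ht, -, hgain⟩
  exact (hgain i hi).2 (hmax i t ht)

theorem not_isStrongNash_of_forall_strictPref [Nonempty ι] (G : Game ι σ) {s t : ∀ i, σ i}
    (ht : t ∈ G.profiles) (hgain : ∀ i, G.StrictPref i t s) : ¬ G.IsStrongNash s := by
  rintro ⟨-, hno⟩
  exact hno ⟨Set.univ, t, Set.univ_nonempty, ht, fun i hi => absurd trivial hi,
    fun i _ => hgain i⟩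

end Game

theorem exPay_le_one_of_right_eq_false (i : Fin 2) {t : Fin 2 → Bool} (ht : t 1 = false) :
    exPay i t ≤ 1 := by
  unfold exPay
  split_ifs <;> simp_all

theorem exPay_of_left_eq_false (i : Fin 2) {t : Fin 2 → Bool} (ht : t 0 = false) :
    exPay i t = 1 := by
  simp [exPay, ht]

theorem exRed_isReduction (T₁ T₂ : Set Bool) (h₁ : T₁.Nonempty) (h₂ : T₂.Nonempty) :
    IsReduction (exRed T₁ T₂ h₁ h₂) exG :=
  ⟨fun _ => Set.subset_univ _, fun _ _ _ => Iff.rfl⟩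

theorem mem_exRed_profiles {T₁ T₂ : Set Bool} {h₁ : T₁.Nonempty} {h₂ : T₂.Nonempty}
    {t : Fin 2 → Bool} : t ∈ (exRed T₁ T₂ h₁ h₂).profiles ↔ t 0 ∈ T₁ ∧ t 1 ∈ T₂ := by
  refine ⟨fun ht => ⟨ht 0, ht 1⟩, fun ⟨ht₀, ht₁⟩ i => ?_⟩
  fin_cases i
  exacts [ht₀, ht₁]

theorem exRed_isStrongNash_of_forall_le {T₁ T₂ : Set Bool} {h₁ : T₁.Nonempty}
    {h₂ : T₂.Nonempty} {s : Fin 2 → Bool} (hs : s ∈ (exRed T₁ T₂ h₁ h₂).profiles)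
    (hmax : ∀ i, ∀ t ∈ (exRed T₁ T₂ h₁ h₂).profiles, exPay i t ≤ exPay i s) :
    (exRed T₁ T₂ h₁ h₂).IsStrongNash s :=
  Game.isStrongNash_of_forall_pref _ hs fun i t ht => ⟨hmax i t ht, hs, ht⟩

/-- the strong Nash equilibrium correspondence violates Merging
Consistency: (D,R) is a strong Nash equilibrium of the reductions with profile
sets {U,D} × {R} and {D} × {L,R}, whose player-by-player union of strategy
sets gives back `exG`, but (D,R) is not a strong Nash equilibrium of `exG`. -/
theorem strongNash_violates_MC :
    ∃ (h₁ : (Set.univ : Set Bool).Nonempty) (h₂ : ({false} : Set Bool).Nonempty),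
      IsReduction (exRed Set.univ {false} h₁ h₂) exG ∧
      IsReduction (exRed {false} Set.univ h₂ h₁) exG ∧
      (∀ i, (exRed Set.univ {false} h₁ h₂).S i ∪ (exRed {false} Set.univ h₂ h₁).S i
        = exG.S i) ∧
      (exRed Set.univ {false} h₁ h₂).IsStrongNash (fun _ => false) ∧
      (exRed {false} Set.univ h₂ h₁).IsStrongNash (fun _ => false) ∧
      ¬ exG.IsStrongNash (fun _ => false) := by
  refine ⟨Set.univ_nonempty, Set.singleton_nonempty false, exRed_isReduction _ _ _ _,
    exRed_isReduction _ _ _ _, ?_, ?_, ?_, ?_⟩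
  · intro i
    fin_cases i <;> simp [exRed, exSub, exG, Set.pair_comm]
  · refine exRed_isStrongNash_of_forall_le (mem_exRed_profiles.2 ⟨trivial, rfl⟩) fun i t ht => ?_
    exact (exPay_le_one_of_right_eq_false i (mem_exRed_profiles.1 ht).2).trans
      (exPay_of_left_eq_false i rfl).ge
  · refine exRed_isStrongNash_of_forall_le (mem_exRed_profiles.2 ⟨rfl, trivial⟩) fun i t ht => ?_
    exact (exPay_of_left_eq_false i (mem_exRed_profiles.1 ht).1).trans_le
      (exPay_of_left_eq_false i rfl).ge
  · refine exG.not_isStrongNash_of_forall_strictPref (t := fun _ => true) (fun _ => trivial)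
      fun i => ?_
    simp only [Game.StrictPref, exG, exPay]
    norm_num
end

section
/- If a solution concept φ on a class of games Γ satisfies Merging Consistency, then it satisfies Converse Independence of Irrelevant Strategies: for any game G in Γ with at least three strategy profiles, if a strategy profile s is a solution to every proper reduction of G in Γ to which s belongs, then s ∈ φ(G). -/
universe u v

variable {ι : Type u} {σ : ι → Type v}

/-! Deleting a single strategy `x` that `s` does not play yields a proper reduction of `G` that
still contains `s`. Three distinct profiles provide two distinct such strategies `x ≠ y`, and
the two reductions "without `x`" and "without `y`" merge back to `G`, so Merging Consistency
turns `s ∈ φ (G - x) ∩ φ (G - y)` into `s ∈ φ G`. -/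

def Game.restrict_s14 (G : Game ι σ) (T : ∀ i, Set (σ i)) (hsub : ∀ i, T i ⊆ G.S i)
    (hne : ∀ i, (T i).Nonempty) : Game ι σ where
  S := T
  nonempty := hne
  pref i s t := G.pref i s t ∧ (∀ j, s j ∈ T j) ∧ (∀ j, t j ∈ T j)
  complete i s t hs ht := by
    rcases G.complete i s t (fun j => hsub j (hs j)) (fun j => hsub j (ht j)) with h | h
    · exact Or.inl ⟨h, hs, ht⟩
    · exact Or.inr ⟨h, ht, hs⟩
  trans i s t u hs ht hu hst htu :=
    ⟨G.trans i s t u (fun j => hsub j (hs j)) (fun j => hsub j (ht j))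
      (fun j => hsub j (hu j)) hst.1 htu.1, hs, hu⟩

theorem Game.restrict_isReduction (G : Game ι σ) (T : ∀ i, Set (σ i))
    (hsub : ∀ i, T i ⊆ G.S i) (hne : ∀ i, (T i).Nonempty) :
    IsReduction (G.restrict_s14 T hsub hne) G :=
  ⟨hsub, fun _ _ _ => Iff.rfl⟩

/-- `x : Σ i, σ i` encodes the strategy `x.2` of player `x.1`. -/
def IsAlternative (S : ∀ i, Set (σ i)) (s : ∀ i, σ i) (x : Σ i, σ i) : Prop :=
  x.2 ∈ S x.1 ∧ x.2 ≠ s x.1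

def eraseStrategy (S : ∀ i, Set (σ i)) (x : Σ i, σ i) (i : ι) : Set (σ i) :=
  {z ∈ S i | (⟨i, z⟩ : Σ i, σ i) ≠ x}

section eraseStrategy

variable {S : ∀ i, Set (σ i)} {s : ∀ i, σ i} {x y : Σ i, σ i}

theorem eraseStrategy_subset (i : ι) : eraseStrategy S x i ⊆ S i :=
  fun _ hz => hz.1

theorem mem_eraseStrategy_of_isAlternative (hs : ∀ i, s i ∈ S i) (hx : IsAlternative S s x)
    (i : ι) : s i ∈ eraseStrategy S x i := by
  refine ⟨hs i, ?_⟩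
  rintro rfl
  exact hx.2 rfl

theorem eraseStrategy_ne (hx : x.2 ∈ S x.1) : eraseStrategy S x ≠ S := by
  intro h
  have hx' : x.2 ∈ eraseStrategy S x x.1 := (congrFun h x.1).symm ▸ hx
  exact hx'.2 rfl

theorem eraseStrategy_union_eraseStrategy (hxy : x ≠ y) (i : ι) :
    eraseStrategy S x i ∪ eraseStrategy S y i = S i := by
  refine Set.Subset.antisymm
    (Set.union_subset (eraseStrategy_subset i) (eraseStrategy_subset i)) fun z hz => ?_
  by_cases hzx : (⟨i, z⟩ : Σ i, σ i) = x
  · exact Or.inr ⟨hz, hzx ▸ hxy⟩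
  · exact Or.inl ⟨hz, hzx⟩

end eraseStrategy

theorem Set.nontrivial_diff_singleton_of_three {α : Type*} {P : Set α} {a b c : α}
    (ha : a ∈ P) (hb : b ∈ P) (hc : c ∈ P) (hab : a ≠ b) (hac : a ≠ c) (hbc : b ≠ c) (s : α) :
    (P \ {s}).Nontrivial := by
  by_cases has : a = s
  · subst has
    exact ⟨b, ⟨hb, hab.symm⟩, c, ⟨hc, hac.symm⟩, hbc⟩
  by_cases hbs : b = s
  · subst hbs
    exact ⟨a, ⟨ha, hab⟩, c, ⟨hc, hbc.symm⟩, hac⟩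
  exact ⟨a, ⟨ha, has⟩, b, ⟨hb, hbs⟩, hab⟩

theorem exists_isAlternative_pair {S : ∀ i, Set (σ i)} {s p q : ∀ i, σ i}
    (hp : ∀ i, p i ∈ S i) (hq : ∀ i, q i ∈ S i) (hps : p ≠ s) (hqs : q ≠ s) (hpq : p ≠ q) :
    ∃ x y : Σ i, σ i, x ≠ y ∧ IsAlternative S s x ∧ IsAlternative S s y := by
  obtain ⟨j, hj⟩ := Function.ne_iff.mp hps
  obtain ⟨k, hk⟩ := Function.ne_iff.mp hqs
  obtain ⟨l, hl⟩ := Function.ne_iff.mp hpq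
  -- `p` and `q` differ at `l`, so at most one of them plays `s l` there.
  by_cases hql : q l = s l
  · refine ⟨⟨l, p l⟩, ⟨k, q k⟩, ?_, ⟨hp l, hql ▸ hl⟩, ⟨hq k, hk⟩⟩
    intro h
    obtain ⟨rfl, hpq'⟩ := Sigma.mk.inj_iff.mp h
    exact hl (eq_of_heq hpq')
  · refine ⟨⟨l, q l⟩, ⟨j, p j⟩, ?_, ⟨hq l, hql⟩, ⟨hp j, hj⟩⟩
    intro h
    obtain ⟨rfl, hqp⟩ := Sigma.mk.inj_iff.mp h
    exact hl (eq_of_heq hqp).symm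

theorem SatMC.mem_of_mem_proper_reductions {Γ : Set (Game ι σ)} {φ : Game ι σ → Set (∀ i, σ i)}
    (hred : ∀ G ∈ Γ, ∀ G', IsReduction G' G → G' ∈ Γ) (hMC : SatMC Γ φ)
    {G : Game ι σ} (hG : G ∈ Γ) {s : ∀ i, σ i}
    (hsol : ∀ G' ∈ Γ, IsReduction G' G → G'.S ≠ G.S → s ∈ G'.profiles → s ∈ φ G')
    {T₁ T₂ : ∀ i, Set (σ i)} (hT₁ : ∀ i, T₁ i ⊆ G.S i) (hT₂ : ∀ i, T₂ i ⊆ G.S i)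
    (hs₁ : ∀ i, s i ∈ T₁ i) (hs₂ : ∀ i, s i ∈ T₂ i) (hne₁ : T₁ ≠ G.S) (hne₂ : T₂ ≠ G.S)
    (hunion : ∀ i, T₁ i ∪ T₂ i = G.S i) : s ∈ φ G := by
  let G₁ := G.restrict_s14 T₁ hT₁ fun i => ⟨s i, hs₁ i⟩
  let G₂ := G.restrict_s14 T₂ hT₂ fun i => ⟨s i, hs₂ i⟩
  have hr₁ : IsReduction G₁ G := G.restrict_isReduction _ _ _
  have hr₂ : IsReduction G₂ G := G.restrict_isReduction _ _ _
  have hG₁ : G₁ ∈ Γ := hred G hG G₁ hr₁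
  have hG₂ : G₂ ∈ Γ := hred G hG G₂ hr₂
  exact hMC G hG G₁ hG₁ G₂ hG₂ hr₁ hr₂ hunion
    ⟨hsol G₁ hG₁ hr₁ hne₁ hs₁, hsol G₂ hG₂ hr₂ hne₂ hs₂⟩

theorem MC_implies_CIIS_general
    (Γ : Set (Game ι σ)) (φ : Game ι σ → Set (∀ i, σ i))
    (hred : ∀ G ∈ Γ, ∀ G', IsReduction G' G → G' ∈ Γ)
    (hMC : SatMC Γ φ) :
    ∀ G ∈ Γ,
      (∃ a b c : ∀ i, σ i, a ∈ G.profiles ∧ b ∈ G.profiles ∧ c ∈ G.profiles ∧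
        a ≠ b ∧ a ≠ c ∧ b ≠ c) →
      ∀ s ∈ G.profiles,
        (∀ G' ∈ Γ, IsReduction G' G → G'.S ≠ G.S → s ∈ G'.profiles → s ∈ φ G') →
        s ∈ φ G := by
  rintro G hG ⟨a, b, c, ha, hb, hc, hab, hac, hbc⟩ s hs hsol
  obtain ⟨p, ⟨hp, hps⟩, q, ⟨hq, hqs⟩, hpq⟩ :=
    Set.nontrivial_diff_singleton_of_three ha hb hc hab hac hbc s
  obtain ⟨x, y, hxy, hx, hy⟩ := exists_isAlternative_pair hp hq hps hqs hpq
  exact hMC.mem_of_mem_proper_reductions hred hG hsol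
    eraseStrategy_subset eraseStrategy_subset
    (mem_eraseStrategy_of_isAlternative hs hx) (mem_eraseStrategy_of_isAlternative hs hy)
    (eraseStrategy_ne hx.1) (eraseStrategy_ne hy.1) (eraseStrategy_union_eraseStrategy hxy)

/-- Merging Consistency implies Converse Independence of
Irrelevant Strategies (on a class closed under reductions): if a game has at
least three strategy profiles and a profile `s` is a solution to every proper
reduction containing it, then `s` is a solution to the game. -/
theorem MC_implies_CIIS [DecidableEq ι] [Fintype ι]
    (Γ : Set (Game ι σ)) (φ : Game ι σ → Set (∀ i, σ i))
    (hred : ∀ G ∈ Γ, ∀ G', IsReduction G' G → G' ∈ Γ)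
    (hMC : SatMC Γ φ) :
    ∀ G ∈ Γ,
      (∃ a b c : ∀ i, σ i, a ∈ G.profiles ∧ b ∈ G.profiles ∧ c ∈ G.profiles ∧
        a ≠ b ∧ a ≠ c ∧ b ≠ c) →
      ∀ s ∈ G.profiles,
        (∀ G' ∈ Γ, IsReduction G' G → G'.S ≠ G.S → s ∈ G'.profiles → s ∈ φ G') →
        s ∈ φ G :=
  MC_implies_CIIS_general Γ φ hred hMC
end

section
/- In a normal-form game G, if s is a Nash equilibrium of G and G' is a strict reduction of G, then s is a feasible profile of G' (no s_i is removed by the strict reduction) and s is a Nash equilibrium of G'. -/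
universe u v

variable {ι : Type u} {σ : ι → Type v}

/-! A removed strategy `s i` would be strictly dominated by a surviving `s'`, so deviating from
`s` to `s'` would strictly benefit player `i`, contradicting that `s` is a Nash equilibrium.
Hence `s` survives, and a Nash equilibrium stays one in any reduction that keeps it, since the
deviations available there are among the old ones and preferences are restricted. -/

theorem Game.update_mem_profiles_s19 [DecidableEq ι] {G : Game ι σ} {s : ∀ i, σ i}
    (hs : s ∈ G.profiles) {i : ι} {t : σ i} (ht : t ∈ G.S i) :
    Function.update s i t ∈ G.profiles := by
  intro j
  rcases eq_or_ne j i with rfl | hji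
  · simpa using ht
  · simpa [hji] using hs j

theorem Game.IsNash.mem_profiles_of_isStrictReduction [DecidableEq ι] {G G' : Game ι σ}
    {s : ∀ i, σ i} (hNE : G.IsNash s) (hred : IsStrictReduction G' G) : s ∈ G'.profiles := by
  intro i
  by_contra hremoved
  obtain ⟨s', hs', hdom⟩ := hred.2.2 i (s i) ⟨hNE.1 i, hremoved⟩
  have hstrict := hdom s hNE.1
  rw [Function.update_eq_self] at hstrict
  exact hstrict.2 (hNE.2 i s' (hred.1.1 i hs'))

theorem Game.IsNash.of_isReduction [DecidableEq ι] {G G' : Game ι σ} {s : ∀ i, σ i}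
    (hNE : G.IsNash s) (hred : IsReduction G' G) (hs : s ∈ G'.profiles) : G'.IsNash s :=
  ⟨hs, fun i t ht => (hred.2 i _ _).2
    ⟨hNE.2 i t (hred.1 i ht), hs, G'.update_mem_profiles_s19 hs ht⟩⟩

theorem nash_survives_strictReduction_general [DecidableEq ι]
    (G G' : Game ι σ) (s : ∀ i, σ i)
    (hNE : G.IsNash s) (hred : IsStrictReduction G' G) :
    s ∈ G'.profiles ∧ G'.IsNash s := by
  have hs : s ∈ G'.profiles := hNE.mem_profiles_of_isStrictReduction hred
  exact ⟨hs, hNE.of_isReduction hred.1 hs⟩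

/-- a Nash equilibrium of `G` survives any strict reduction `G'`
of `G` and remains a Nash equilibrium of `G'`. -/
theorem nash_survives_strictReduction [DecidableEq ι] [Fintype ι]
    (G G' : Game ι σ) (s : ∀ i, σ i)
    (hNE : G.IsNash s) (hred : IsStrictReduction G' G) :
    s ∈ G'.profiles ∧ G'.IsNash s :=
  nash_survives_strictReduction_general G G' s hNE hred
end
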